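/- Let p ≥ 2 and set a = √(p²−p+1)/(2√(p−1)). Define r : {(ξ,y) : ξ ≠ 0} → ℝ³ by r₁ = (1/√(3(p−1)))·(√(p²−p+1)·coth(a ξ) − 1)·e^{ξ/(2√(p−1)) + (2p−1)y/(2√(3(p−1)))}, r₂ = (1/√(3(p−1)))·(√(p²−p+1)·coth(a ξ) − (p−1))·e^{(√(p−1)/2)ξ − (p+1)y/(2√(3(p−1)))}, r₃ = −(1/(√3 p))·(√(p²−p+1)·coth(a ξ) + p)·e^{−(p/(2√(p−1)))ξ − (p−2)y/(2√(3(p−1)))}. Then each component satisfies ∂²r/∂ξ² + ∂²r/∂y² = ((p²−p+1)/(2(p−1)))·(coth²(a ξ) − 1/3)·r for all ξ ≠ 0, y ∈ ℝ. -/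

import Mathlib

/-!
Each component of `r` has the separable form `(A coth (a ξ) + B) e^{α ξ + β y}`. Since
`coth' = 1 - coth²`, the Laplacian of such a function is `e^{α ξ + β y}` times a cubic in
`c = coth (a ξ)`, and this cubic is `2a² (c² - 1/3) (A c + B)` exactly when `a B = -α A` and
`α² + β² = 4a²/3`. Both relations hold for the three components, and
`2a² = (p² - p + 1) / (2 (p - 1))`.
-/

/-- Real hyperbolic cotangent. -/
noncomputable def coth (x : ℝ) : ℝ := Real.cosh x / Real.sinh x

/-- The isothermal parametrization (case `c = −2(p+q)`, `s = −1`) of the complete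
hyperbolic affine sphere asymptotic to the cone
`{x : x₂ ≤ x₁^{1/p} x₃^{1/q}}` (case 3 of Hildebrand's classification), up to a sign
change in the second coordinate; here `a = √(p²−p+1)/(2√(p−1))`. -/
noncomputable def r (p a ξ y : ℝ) : Fin 3 → ℝ :=
  ![ (1 / Real.sqrt (3 * (p - 1))) * (Real.sqrt (p ^ 2 - p + 1) * coth (a * ξ) - 1) *
       Real.exp (ξ / (2 * Real.sqrt (p - 1)) +
         (2 * p - 1) * y / (2 * Real.sqrt (3 * (p - 1)))),
     (1 / Real.sqrt (3 * (p - 1))) * (Real.sqrt (p ^ 2 - p + 1) * coth (a * ξ) - (p - 1)) *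
       Real.exp ((Real.sqrt (p - 1) / 2) * ξ -
         (p + 1) * y / (2 * Real.sqrt (3 * (p - 1)))),
     -(1 / (Real.sqrt 3 * p)) * (Real.sqrt (p ^ 2 - p + 1) * coth (a * ξ) + p) *
       Real.exp (-(p / (2 * Real.sqrt (p - 1))) * ξ -
         (p - 2) * y / (2 * Real.sqrt (3 * (p - 1)))) ]

open Real

lemma hasDerivAt_coth {x : ℝ} (hx : x ≠ 0) : HasDerivAt coth (1 - coth x ^ 2) x := by
  have hs : sinh x ≠ 0 := sinh_ne_zero.mpr hx
  refine ((hasDerivAt_cosh x).div (hasDerivAt_sinh x) hs).congr_deriv ?_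
  rw [coth]
  field_simp

lemma hasDerivAt_comp_coth_mul_mul_exp {Q : ℝ → ℝ} {Q' a α d x : ℝ} (hx : a * x ≠ 0)
    (hQ : HasDerivAt Q Q' (coth (a * x))) :
    HasDerivAt (fun s => Q (coth (a * s)) * exp (α * s + d))
      ((a * (1 - coth (a * x) ^ 2) * Q' + α * Q (coth (a * x))) * exp (α * x + d)) x := by
  have hc : HasDerivAt (fun s => coth (a * s)) ((1 - coth (a * x) ^ 2) * a) x :=
    (hasDerivAt_coth hx).comp x ((hasDerivAt_id x).const_mul a |>.congr_deriv (mul_one a))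
  have he : HasDerivAt (fun s => exp (α * s + d)) (exp (α * x + d) * α) x :=
    (((hasDerivAt_id x).const_mul α).add_const d).exp.congr_deriv (by simp)
  exact ((hQ.comp x hc).mul he).congr_deriv (by rw [Function.comp_apply]; ring)

lemma deriv_deriv_coth_mul_mul_exp (a A B α d : ℝ) {x : ℝ} (hx : a * x ≠ 0) :
    deriv (deriv fun s => (A * coth (a * s) + B) * exp (α * s + d)) x
      = (-2 * a ^ 2 * A * coth (a * x) * (1 - coth (a * x) ^ 2)
          + 2 * a * α * A * (1 - coth (a * x) ^ 2)
          + α ^ 2 * (A * coth (a * x) + B)) * exp (α * x + d) := by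
  have hfirst : deriv (fun s => (A * coth (a * s) + B) * exp (α * s + d)) =ᶠ[nhds x]
      fun s => (a * (1 - coth (a * s) ^ 2) * A + α * (A * coth (a * s) + B)) *
        exp (α * s + d) := by
    filter_upwards [isOpen_ne_fun (continuous_const_mul a) continuous_const |>.mem_nhds hx]
      with s hs
    exact (hasDerivAt_comp_coth_mul_mul_exp (Q := fun c => A * c + B) hs
      (((hasDerivAt_id _).const_mul A).add_const B |>.congr_deriv (mul_one A))).deriv
  rw [hfirst.deriv_eq]
  have hQ : HasDerivAt (fun c => a * (1 - c ^ 2) * A + α * (A * c + B))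
      (-2 * a * A * coth (a * x) + α * A) (coth (a * x)) := by
    refine ((((hasDerivAt_pow 2 _).const_sub 1).const_mul a).mul_const A).add
      (((hasDerivAt_id _).const_mul A).add_const B |>.const_mul α) |>.congr_deriv ?_
    push_cast; ring
  rw [(hasDerivAt_comp_coth_mul_mul_exp hx hQ).deriv]
  ring

lemma deriv_deriv_const_mul_exp (C β e y : ℝ) :
    deriv (deriv fun t => C * exp (e + β * t)) y = β ^ 2 * (C * exp (e + β * y)) := by
  have h : ∀ t, HasDerivAt (fun t => C * exp (e + β * t)) (β * (C * exp (e + β * t))) t :=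
    fun t => ((((hasDerivAt_id t).const_mul β).const_add e).exp.const_mul C).congr_deriv
      (by rw [id]; ring)
  rw [funext fun t => (h t).deriv, ((h y).const_mul β).deriv]
  ring

lemma laplacian_coth_mul_mul_exp (a A B α β : ℝ) {ξ : ℝ} (hξ : a * ξ ≠ 0) (y : ℝ)
    (hB : a * B = -(α * A)) (hαβ : α ^ 2 + β ^ 2 = 4 * a ^ 2 / 3) :
    deriv (deriv fun s => (A * coth (a * s) + B) * exp (α * s + β * y)) ξ
      + deriv (deriv fun t => (A * coth (a * ξ) + B) * exp (α * ξ + β * t)) y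
      = 2 * a ^ 2 * (coth (a * ξ) ^ 2 - 1 / 3) *
          ((A * coth (a * ξ) + B) * exp (α * ξ + β * y)) := by
  rw [deriv_deriv_coth_mul_mul_exp a A B α _ hξ, deriv_deriv_const_mul_exp]
  linear_combination exp (α * ξ + β * y) * (2 * a - 2 * a * coth (a * ξ) ^ 2) * hB
    + exp (α * ξ + β * y) * (A * coth (a * ξ) + B) * hαβ

lemma exists_r_apply_eq_coth_mul_mul_exp {p a : ℝ} (hp : 1 < p)
    (ha : a = √(p ^ 2 - p + 1) / (2 * √(p - 1))) (i : Fin 3) :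
    ∃ A B α β : ℝ, a * B = -(α * A) ∧ α ^ 2 + β ^ 2 = 4 * a ^ 2 / 3 ∧
      ∀ ξ y, r p a ξ y i = (A * coth (a * ξ) + B) * exp (α * ξ + β * y) := by
  have hU : √(p - 1) ^ 2 = p - 1 := sq_sqrt (by linarith)
  have hV : √(p ^ 2 - p + 1) ^ 2 = p ^ 2 - p + 1 := sq_sqrt (by nlinarith)
  have hW : √(3 * (p - 1)) ^ 2 = 3 * (p - 1) := sq_sqrt (by linarith)
  have hU0 : √(p - 1) ≠ 0 := (sqrt_pos.mpr (by linarith)).ne'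
  have hW0 : √(3 * (p - 1)) ≠ 0 := (sqrt_pos.mpr (by linarith)).ne'
  have h30 : √3 ≠ 0 := by positivity
  have hp0 : p ≠ 0 := by positivity
  subst ha
  set U := √(p - 1) with hUdef
  set V := √(p ^ 2 - p + 1) with hVdef
  set W := √(3 * (p - 1)) with hWdef
  fin_cases i
  · refine ⟨V / W, -1 / W, 1 / (2 * U), (2 * p - 1) / (2 * W), ?_, ?_, fun ξ y => ?_⟩
    · field_simp
    · field_simp
      rw [hU, hV, hW]
      ring
    · simp only [r, ← hUdef, ← hVdef, ← hWdef, Fin.reduceFinMk, Matrix.cons_val]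
      field_simp
      ring_nf
  · refine ⟨V / W, -(p - 1) / W, U / 2, -(p + 1) / (2 * W), ?_, ?_, fun ξ y => ?_⟩
    · field_simp
      rw [hU]
    · field_simp
      rw [hU, hV, hW]
      ring
    · simp only [r, ← hUdef, ← hVdef, ← hWdef, Fin.reduceFinMk, Matrix.cons_val]
      field_simp
      ring_nf
  · refine ⟨-V / (√3 * p), -1 / √3, -p / (2 * U), -(p - 2) / (2 * W), ?_, ?_, fun ξ y => ?_⟩
    · field_simp
    · field_simp
      rw [hU, hV, hW]
      ring
    · simp only [r, ← hUdef, ← hVdef, ← hWdef, Fin.reduceFinMk, Matrix.cons_val]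
      field_simp
      ring_nf

/-- Each component satisfies the affine-sphere equation
`Δ r = ((p²−p+1)/(2(p−1))) (coth²(a ξ) − 1/3) r`. -/
theorem case3_affine_sphere_laplace (p : ℝ) (hp : 2 ≤ p)
    (a : ℝ) (ha : a = Real.sqrt (p ^ 2 - p + 1) / (2 * Real.sqrt (p - 1))) :
    ∀ ξ : ℝ, ξ ≠ 0 → ∀ y : ℝ, ∀ i : Fin 3,
      deriv (deriv fun s => r p a s y i) ξ + deriv (deriv fun s => r p a ξ s i) y
        = ((p ^ 2 - p + 1) / (2 * (p - 1))) * ((coth (a * ξ)) ^ 2 - 1 / 3) * r p a ξ y i := by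
  intro ξ hξ y i
  obtain ⟨A, B, α, β, hB, hαβ, hr⟩ := exists_r_apply_eq_coth_mul_mul_exp (by linarith) ha i
  have hp1 : 0 < p - 1 := by linarith
  have ha0 : a ≠ 0 := by
    rw [ha]
    exact (div_pos (sqrt_pos.mpr (by nlinarith)) (by positivity)).ne'
  have hK : (p ^ 2 - p + 1) / (2 * (p - 1)) = 2 * a ^ 2 := by
    rw [ha, div_pow, mul_pow, sq_sqrt (by nlinarith), sq_sqrt hp1.le]
    field_simp
  simp only [hr]
  rw [hK]
  exact laplacian_coth_mul_mul_exp a A B α β (mul_ne_zero ha0 hξ) y hB hαβ
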